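/- Let G be a finite connected graph of diameter n. Then the independence complex I_G is ⌊n/3 − 1⌋-connected. -/

import Mathlib

attribute [local instance] Classical.propDecidable

/-- A finite abstract simplicial complex on vertex type `V`:
a downward-closed family of nonempty finite vertex sets. -/
structure ASC (V : Type) where
  faces : Set (Finset V)
  nonempty_of_mem : ∀ s ∈ faces, s.Nonempty
  down_closed : ∀ s ∈ faces, ∀ t : Finset V, t ⊆ s → t.Nonempty → t ∈ faces

namespace ASC

variable {V : Type}

/-- The geometric realization of `K`, as a subspace of `V → ℝ`. -/
def space [Fintype V] (K : ASC V) : Type :=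
  {f : V → ℝ // (∃ s ∈ K.faces, ∀ v, f v ≠ 0 → v ∈ s) ∧ (∀ v, 0 ≤ f v) ∧ ∑ v, f v = 1}

noncomputable instance [Fintype V] (K : ASC V) : TopologicalSpace K.space :=
  instTopologicalSpaceSubtype

/-- `K` is a clique (flag) complex: every nonempty vertex set which pairwise spans
edges of `K` is a face of `K`. -/
def IsClique (K : ASC V) : Prop :=
  ∀ s : Finset V, s.Nonempty →
    (∀ v ∈ s, ∀ w ∈ s, ({v, w} : Finset V) ∈ K.faces) → s ∈ K.faces

/-- The closed star of a vertex `v`: faces `τ` with `τ ∪ {v}` a face. -/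
def star (K : ASC V) (v : V) : ASC V where
  faces := {s | s ∈ K.faces ∧ insert v s ∈ K.faces}
  nonempty_of_mem s hs := K.nonempty_of_mem s hs.1
  down_closed s hs t hts htne :=
    ⟨K.down_closed s hs.1 t hts htne,
     K.down_closed _ hs.2 _ (Finset.insert_subset_insert v hts) (Finset.insert_nonempty _ _)⟩

/-- The intersection `⋂_{v ∈ σ} st_K(v)` of the stars of the vertices of `σ`. -/
def interStars (K : ASC V) (σ : Finset V) : ASC V where
  faces := {s | s ∈ K.faces ∧ ∀ v ∈ σ, insert v s ∈ K.faces}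
  nonempty_of_mem s hs := K.nonempty_of_mem s hs.1
  down_closed s hs t hts htne :=
    ⟨K.down_closed s hs.1 t hts htne, fun v hv =>
      K.down_closed _ (hs.2 v hv) _ (Finset.insert_subset_insert v hts)
        (Finset.insert_nonempty _ _)⟩

/-- The star cluster `SC_K(σ) = ⋃_{v ∈ σ} st_K(v)` of a simplex `σ`. -/
def starCluster (K : ASC V) (σ : Finset V) : ASC V where
  faces := {s | s ∈ K.faces ∧ ∃ v ∈ σ, insert v s ∈ K.faces}
  nonempty_of_mem s hs := K.nonempty_of_mem s hs.1
  down_closed s hs t hts htne :=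
    ⟨K.down_closed s hs.1 t hts htne, by
      obtain ⟨v, hv, hins⟩ := hs.2
      exact ⟨v, hv, K.down_closed _ hins _ (Finset.insert_subset_insert v hts)
        (Finset.insert_nonempty _ _)⟩⟩

/-- Intersection of two simplicial complexes. -/
def inter (K₁ K₂ : ASC V) : ASC V where
  faces := K₁.faces ∩ K₂.faces
  nonempty_of_mem s hs := K₁.nonempty_of_mem s hs.1
  down_closed s hs t hts htne :=
    ⟨K₁.down_closed s hs.1 t hts htne, K₂.down_closed s hs.2 t hts htne⟩

end ASC

/-- The relation on `X × [0,1]` collapsing `X × {0}` and `X × {1}` to points. -/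
def SuspRel (X : Type) [TopologicalSpace X] :
    X × unitInterval → X × unitInterval → Prop := fun a b =>
  (a.2 = 0 ∧ b.2 = 0) ∨ (a.2 = 1 ∧ b.2 = 1)

/-- The unreduced suspension of a topological space. -/
def Susp (X : Type) [TopologicalSpace X] : Type := Quot (SuspRel X)

noncomputable instance Susp.ts (X : Type) [TopologicalSpace X] : TopologicalSpace (Susp X) :=
  instTopologicalSpaceQuot

/-- The independence complex of a graph: faces are the nonempty independent vertex sets. -/
def SimpleGraph.indepComplex (G : SimpleGraph V) : ASC V where
  faces := {s | s.Nonempty ∧ ∀ v ∈ s, ∀ w ∈ s, ¬ G.Adj v w}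
  nonempty_of_mem s hs := hs.1
  down_closed s hs t hts htne := ⟨htne, fun v hv w hw => hs.2 v (hts hv) w (hts hw)⟩

/-- `X` is `n`-connected (`n : ℤ`): nonempty when `n ≥ -1`, and all homotopy
groups `π_k` for `0 ≤ k ≤ n` are trivial (triviality of `π_0` meaning
path-connectedness). -/
def NConnected (n : ℤ) (X : Type) [TopologicalSpace X] : Prop :=
  (-1 ≤ n → Nonempty X) ∧
    ∀ k : ℕ, (k : ℤ) ≤ n → ∀ x : X, Subsingleton (HomotopyGroup (Fin k) X x)


/-!
A geodesic of length `n ≥ 3 (k + 1)` contains `k + 2` vertices `w_i` pairwise at distance at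
least `3`. Their neighbourhoods are disjoint, so a point `q` of `|I_G|` has mass less than
`1 / (k + 1)` next to at least one of them. Given weights `a` on the `w_i` whose support carries
less than the whole mass of `q` next to it, `q` is contracted in three stages, each staying
inside independent sets: the mass next to the `w_i` of large weight is removed, then `q` moves to
the corresponding convex combination of the `w_i` (which are pairwise non-adjacent), and
finally to a fixed `w_o`. For a map `f : I^k → |I_G|`, such weights are produced continuously by
a partition of unity of multiplicity at most `k + 1` (built from the hat functions of a Kuhn
triangulation) subordinate to the open sets of those `p` for which `f p` has mass less than
`1 / (k + 1)` next to `w_i`. The resulting homotopy moves the boundary of the cube along a single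
path, so `f` is null-homotopic relative to the boundary.
-/

open Finset unitInterval

/-! ### Points of the realization -/

namespace ASC

variable {V : Type} [Fintype V] {K : ASC V}

lemma continuous_apply_coe (x : V) : Continuous fun q : K.space => q.1 x :=
  (continuous_apply x).comp continuous_subtype_val

lemma coe_mem_stdSimplex (q : K.space) : q.1 ∈ stdSimplex ℝ V := q.2.2

end ASC

namespace SimpleGraph

variable {V : Type} {G : SimpleGraph V}

section Realization

variable [Fintype V]

lemma not_adj_of_ne_zero (q : G.indepComplex.space) {x y : V} (hx : q.1 x ≠ 0)
    (hy : q.1 y ≠ 0) : ¬ G.Adj x y := by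
  obtain ⟨s, hs, hsupp⟩ := q.2.1
  exact hs.2 x (hsupp x hx) y (hsupp y hy)

noncomputable def indepPoint (F : V → ℝ) (hF : F ∈ stdSimplex ℝ V)
    (hind : ∀ x y, F x ≠ 0 → F y ≠ 0 → ¬ G.Adj x y) : G.indepComplex.space :=
  have hsupp : ∃ x ∈ univ, F x ≠ 0 := exists_ne_zero_of_sum_ne_zero (hF.2.symm ▸ one_ne_zero)
  ⟨F, ⟨univ.filter (F · ≠ 0), ⟨filter_nonempty_iff.2 hsupp,
    fun x hx y hy => hind x y (mem_filter.1 hx).2 (mem_filter.1 hy).2⟩,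
    fun x hx => mem_filter.2 ⟨mem_univ x, hx⟩⟩, hF⟩

lemma continuous_indepPoint {Y : Type*} [TopologicalSpace Y] {F : Y → V → ℝ}
    (hF : ∀ x, Continuous fun y => F y x) (hmem : ∀ y, F y ∈ stdSimplex ℝ V)
    (hind : ∀ y x x', F y x ≠ 0 → F y x' ≠ 0 → ¬ G.Adj x x') :
    Continuous fun y => indepPoint (G := G) (F y) (hmem y) (hind y) :=
  (continuous_pi hF).subtype_mk _

noncomputable def vertexPoint (v : V) : G.indepComplex.space :=
  indepPoint (Pi.single v 1) (single_mem_stdSimplex ℝ v) fun x y hx hy => by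
    rw [Pi.single_apply] at hx hy
    rw [of_not_not fun h => hx (if_neg h), of_not_not fun h => hy (if_neg h)]
    exact G.loopless.irrefl v

end Realization

/-! ### Families of far-apart vertices -/

lemma Connected.exists_dist_eq_of_le (hconn : G.Connected) {u v : V} {j : ℕ}
    (hj : j ≤ G.dist u v) : ∃ w, G.dist u w = j := by
  obtain ⟨p, hp⟩ := hconn.exists_walk_length_eq_dist u v
  refine ⟨p.getVert j, le_antisymm ?_ ?_⟩
  · exact (dist_le (p.take j)).trans (by simp)
  · have := dist_le (p.drop j)
    have := hconn.dist_triangle (u := u) (v := p.getVert j) (w := v)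
    simp only [Walk.drop_length] at *
    omega

/-- A family of vertices pairwise at distance at least `3`. -/
structure DistantFamily (G : SimpleGraph V) (ι : Type) where
  vertex : ι → V
  not_adj : ∀ i j, ¬ G.Adj (vertex i) (vertex j)
  eq_of_adj_of_adj : ∀ x i j, G.Adj x (vertex i) → G.Adj x (vertex j) → i = j

lemma Connected.nonempty_distantFamily (hconn : G.Connected) {u v : V} {k : ℕ}
    (hk : 3 * k ≤ G.dist u v) : Nonempty (G.DistantFamily (Fin (k + 1))) := by
  choose w hw using fun i : Fin (k + 1) =>
    hconn.exists_dist_eq_of_le (u := u) (v := v) (j := 3 * i) (by omega)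
  have hclose : ∀ {x y}, G.Adj x y →
      G.dist u y ≤ G.dist u x + 1 ∧ G.dist u x ≤ G.dist u y + 1 :=
    fun hxy => by rcases hxy.diff_dist_adj (u := u) with h | h | h <;> omega
  refine ⟨⟨w, fun i j hij => ?_, fun x i j hi hj => Fin.ext ?_⟩⟩
  · obtain rfl : i = j := Fin.ext (by have := hclose hij; rw [hw, hw] at this; omega)
    exact G.loopless.irrefl _ hij
  · have := hclose hi; have := hclose hj; rw [hw] at *; omega

end SimpleGraph

namespace SimpleGraph.DistantFamily

variable {V ι : Type} [Fintype V] {G : SimpleGraph V} (S : G.DistantFamily ι)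

noncomputable def nbhdWeight (i : ι) (q : G.indepComplex.space) : ℝ :=
  ∑ x, if G.Adj x (S.vertex i) then q.1 x else 0

lemma nbhdWeight_nonneg (i : ι) (q : G.indepComplex.space) : 0 ≤ S.nbhdWeight i q :=
  sum_nonneg fun x _ => by split_ifs <;> simp [(ASC.coe_mem_stdSimplex q).1 x]

lemma continuous_nbhdWeight (i : ι) : Continuous (S.nbhdWeight i) :=
  continuous_finsetSum _ fun x _ => by
    split_ifs
    exacts [ASC.continuous_apply_coe x, continuous_const]

variable [Fintype ι]

lemma sum_nbhdWeight_le_one (q : G.indepComplex.space) : ∑ i, S.nbhdWeight i q ≤ 1 := by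
  rw [← (ASC.coe_mem_stdSimplex q).2]
  unfold nbhdWeight
  rw [sum_comm]
  refine sum_le_sum fun x _ => ?_
  by_cases hx : ∃ i, G.Adj x (S.vertex i)
  · obtain ⟨i, hi⟩ := hx
    rw [sum_eq_single_of_mem i (mem_univ i) fun j _ hj =>
      if_neg fun hj' => hj (S.eq_of_adj_of_adj x j i hj' hi), if_pos hi]
  · simpa [not_exists.1 hx] using (ASC.coe_mem_stdSimplex q).1 x

lemma exists_mul_nbhdWeight_lt_one (q : G.indepComplex.space) {k : ℕ}
    (hk : k < Fintype.card ι) : ∃ i, k * S.nbhdWeight i q < 1 := by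
  by_contra! h
  have := sum_le_sum fun i (_ : i ∈ univ) => h i
  rw [← mul_sum, sum_const, card_univ, nsmul_one] at this
  have hk' : (k : ℝ) + 1 ≤ Fintype.card ι := by exact_mod_cast hk
  nlinarith [S.sum_nbhdWeight_le_one q, (k.cast_nonneg : (0 : ℝ) ≤ k)]

/-- Weights on the family along which `contraction` deforms `q`. -/
structure Admissible (q : G.indepComplex.space) (a : ι → ℝ) : Prop where
  mem_stdSimplex : a ∈ stdSimplex ℝ ι
  sum_nbhdWeight_lt_one : ∑ i with a i ≠ 0, S.nbhdWeight i q < 1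

lemma admissible_of_card_le {q : G.indepComplex.space} {a : ι → ℝ} (k : ℕ)
    (ha : a ∈ stdSimplex ℝ ι) (hcard : #{i | a i ≠ 0} ≤ k)
    (hsmall : ∀ i, a i ≠ 0 → k * S.nbhdWeight i q < 1) : S.Admissible q a := by
  refine ⟨ha, ?_⟩
  have hne : ({i | a i ≠ 0} : Finset ι).Nonempty :=
    filter_nonempty_iff.2 (exists_ne_zero_of_sum_ne_zero (ha.2.symm ▸ one_ne_zero))
  have hk : (0 : ℝ) < k := by exact_mod_cast hne.card_pos.trans_le hcard
  have : k * ∑ i with a i ≠ 0, S.nbhdWeight i q < k := by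
    calc k * ∑ i with a i ≠ 0, S.nbhdWeight i q
        = ∑ i with a i ≠ 0, k * S.nbhdWeight i q := mul_sum _ _ _
      _ < ∑ i with a i ≠ 0, (1 : ℝ) :=
          sum_lt_sum_of_nonempty hne fun i hi => hsmall i (mem_filter.1 hi).2
      _ ≤ k := by simpa using (Nat.cast_le (α := ℝ)).2 hcard
  nlinarith

lemma admissible_single {q : G.indepComplex.space} {i : ι} (h : S.nbhdWeight i q < 1) :
    S.Admissible q (Pi.single i 1) :=
  S.admissible_of_card_le 1 (single_mem_stdSimplex ℝ i)
    (card_le_one.2 fun j hj j' hj' => by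
      simp only [mem_filter, Pi.single_apply] at hj hj'
      rw [of_not_not fun h => hj.2 (if_neg h), of_not_not fun h => hj'.2 (if_neg h)])
    fun j hj => by
      rw [of_not_not fun h => hj (Pi.single_eq_of_ne h 1)]
      simpa using h

end SimpleGraph.DistantFamily

/-! ### The contraction -/

lemma one_sub_mul_add_mul_mem_stdSimplex {ι : Type} [Fintype ι] {P Q : ι → ℝ}
    (hP : P ∈ stdSimplex ℝ ι) (hQ : Q ∈ stdSimplex ℝ ι) {s : ℝ} (hs0 : 0 ≤ s) (hs1 : s ≤ 1) :
    (fun x => (1 - s) * P x + s * Q x) ∈ stdSimplex ℝ ι :=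
  convex_stdSimplex ℝ ι hP hQ (by linarith) hs0 (by ring)

lemma ne_zero_of_one_sub_mul_add_mul_ne_zero {s a b : ℝ} (h : (1 - s) * a + s * b ≠ 0) :
    (s ≠ 1 ∧ a ≠ 0) ∨ (s ≠ 0 ∧ b ≠ 0) := by
  by_contra! hc
  apply h
  rcases eq_or_ne s 1 with rfl | hs1
  · rcases eq_or_ne b 0 with rfl | hb
    · ring
    · exact absurd (hc.2 one_ne_zero) hb
  · rw [hc.1 hs1]
    rcases eq_or_ne s 0 with rfl | hs0
    · ring
    · rw [hc.2 hs0]; ring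

/-- `stage 0`, `stage 1`, `stage 2` rise from `0` to `1` one after the other, on the
thirds of `[0, 1]`. -/
noncomputable def stage (j : ℕ) (θ : ℝ) : ℝ := max 0 (min 1 (3 * θ - j))

section Stage

variable {j : ℕ} {θ : ℝ}

lemma stage_nonneg : 0 ≤ stage j θ := le_max_left _ _

lemma stage_le_one : stage j θ ≤ 1 := max_le zero_le_one (min_le_left _ _)

lemma stage_eq_one_of_succ_ne_zero (h : stage (j + 1) θ ≠ 0) : stage j θ = 1 := by
  unfold stage at *
  push_cast at h
  have : 0 < 3 * θ - (j + 1) := by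
    by_contra! hle
    exact h (max_eq_left (min_le_of_right_le hle))
  rw [min_eq_left (by linarith), max_eq_right zero_le_one]

lemma stage_two_one : stage 2 1 = 1 := by norm_num [stage]

lemma continuous_stage : Continuous (stage j) := by unfold stage; fun_prop

end Stage

namespace SimpleGraph.DistantFamily

/-- Half the average weight, so that some weight of a point of the simplex exceeds it. -/
noncomputable def threshold (ι : Type) [Fintype ι] : ℝ := (2 * Fintype.card ι : ℝ)⁻¹

section Cutoff

variable {ι : Type} [Fintype ι]

noncomputable def cutoff (a : ι → ℝ) (i : ι) : ℝ := min 1 (a i / threshold ι)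

noncomputable def excess (a : ι → ℝ) (i : ι) : ℝ := max (a i - threshold ι) 0

variable {a : ι → ℝ} {i : ι}

lemma threshold_pos (i : ι) : 0 < threshold ι := by
  have := Fintype.card_pos_iff.2 ⟨i⟩
  unfold threshold; positivity

lemma cutoff_nonneg (ha : 0 ≤ a i) : 0 ≤ cutoff a i :=
  le_min zero_le_one (div_nonneg ha (threshold_pos i).le)

lemma cutoff_le_one : cutoff a i ≤ 1 := min_le_left _ _

lemma cutoff_eq_zero (ha : a i = 0) : cutoff a i = 0 := by simp [cutoff, ha]

lemma cutoff_eq_one_of_excess_ne_zero (h : excess a i ≠ 0) : cutoff a i = 1 := by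
  have : threshold ι < a i := by
    by_contra! hle
    exact h (max_eq_right (by linarith))
  exact min_eq_left ((one_le_div (threshold_pos i)).2 this.le)

lemma excess_nonneg : 0 ≤ excess a i := le_max_right _ _

lemma sum_excess_pos (ha : a ∈ stdSimplex ℝ ι) : 0 < ∑ i, excess a i := by
  have hne : (univ : Finset ι).Nonempty := nonempty_of_sum_ne_zero (ha.2.symm ▸ one_ne_zero)
  have hcard : (0 : ℝ) < Fintype.card ι := by exact_mod_cast hne.card_pos
  obtain ⟨i, -, hi⟩ := exists_le_of_sum_le hne (f := fun _ => (Fintype.card ι : ℝ)⁻¹) (g := a)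
    (by simp [ha.2, hcard.ne'])
  have : threshold ι ≤ excess a i := by
    unfold excess threshold at *
    rw [mul_inv] at *
    exact le_max_of_le_left (by linarith [inv_pos.2 hcard])
  exact (threshold_pos i).trans_le this |>.trans_le
    (single_le_sum (f := excess a) (fun j _ => excess_nonneg) (mem_univ i))

end Cutoff

variable {V ι : Type} [Fintype ι] {G : SimpleGraph V} (S : G.DistantFamily ι)

noncomputable def nbhdCutoff (a : ι → ℝ) (x : V) : ℝ :=
  ∑ i, if G.Adj x (S.vertex i) then cutoff a i else 0

noncomputable def spread (a : ι → ℝ) (x : V) : ℝ :=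
  ∑ i, if x = S.vertex i then excess a i / ∑ j, excess a j else 0

section

variable {S} {a : ι → ℝ} {x : V}

lemma nbhdCutoff_of_adj {i : ι} (h : G.Adj x (S.vertex i)) :
    S.nbhdCutoff a x = cutoff a i := by
  rw [nbhdCutoff, sum_eq_single_of_mem i (mem_univ i) fun j _ hj =>
    if_neg fun hj' => hj (S.eq_of_adj_of_adj x j i hj' h), if_pos h]

lemma nbhdCutoff_of_not_adj (h : ∀ i, ¬ G.Adj x (S.vertex i)) : S.nbhdCutoff a x = 0 :=
  sum_eq_zero fun i _ => if_neg (h i)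

lemma nbhdCutoff_mem_Icc (ha : ∀ i, 0 ≤ a i) : S.nbhdCutoff a x ∈ Set.Icc 0 1 := by
  by_cases hx : ∃ i, G.Adj x (S.vertex i)
  · obtain ⟨i, hi⟩ := hx
    rw [nbhdCutoff_of_adj hi]
    exact ⟨cutoff_nonneg (ha i), cutoff_le_one⟩
  · simp [nbhdCutoff_of_not_adj (not_exists.1 hx)]

lemma spread_ne_zero (h : S.spread a x ≠ 0) : ∃ i, x = S.vertex i ∧ excess a i ≠ 0 := by
  obtain ⟨i, -, hi⟩ := exists_ne_zero_of_sum_ne_zero h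
  by_cases hx : x = S.vertex i
  · rw [if_pos hx] at hi
    exact ⟨i, hx, left_ne_zero_of_mul hi⟩
  · exact absurd (if_neg hx) hi

end

variable [Fintype V]

noncomputable def cutoffMass (a : ι → ℝ) (q : G.indepComplex.space) : ℝ :=
  ∑ x, q.1 x * S.nbhdCutoff a x

/-- At `t = 1` all mass of `q` next to the vertices `S.vertex i` with `a i > threshold ι` is
removed, and the rest renormalized. -/
noncomputable def shrink (t : ℝ) (q : G.indepComplex.space) (a : ι → ℝ) (x : V) : ℝ :=
  q.1 x * (1 - t * S.nbhdCutoff a x) / (1 - t * S.cutoffMass a q)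

noncomputable def deformWeight (o : ι) (θ : ℝ) (q : G.indepComplex.space) (a : ι → ℝ)
    (x : V) : ℝ :=
  (1 - stage 2 θ) * ((1 - stage 1 θ) * S.shrink (stage 0 θ) q a x + stage 1 θ * S.spread a x)
    + stage 2 θ * (Pi.single (S.vertex o) 1 : V → ℝ) x

def admissibleSet : Set (G.indepComplex.space × (ι → ℝ)) := {qa | S.Admissible qa.1 qa.2}

variable {S} {a : ι → ℝ} {q : G.indepComplex.space} {x : V} {t θ : ℝ}

lemma spread_mem_stdSimplex (ha : a ∈ stdSimplex ℝ ι) : S.spread a ∈ stdSimplex ℝ V := by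
  have hE := sum_excess_pos ha
  refine ⟨fun x => sum_nonneg fun i _ => ?_, ?_⟩
  · split_ifs
    exacts [div_nonneg excess_nonneg hE.le, le_rfl]
  · unfold spread
    rw [sum_comm]
    simp only [sum_ite_eq', mem_univ, if_true, ← sum_div]
    exact div_self hE.ne'

lemma cutoffMass_eq : S.cutoffMass a q = ∑ i, cutoff a i * S.nbhdWeight i q := by
  simp only [cutoffMass, nbhdCutoff, nbhdWeight, mul_sum]
  rw [sum_comm]
  refine sum_congr rfl fun i _ => sum_congr rfl fun x _ => ?_
  split_ifs <;> simp [mul_comm]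

lemma cutoffMass_nonneg (ha : ∀ i, 0 ≤ a i) : 0 ≤ S.cutoffMass a q :=
  sum_nonneg fun x _ =>
    mul_nonneg ((ASC.coe_mem_stdSimplex q).1 x) (nbhdCutoff_mem_Icc ha).1

/-- The cutoff vanishes off the support of `a` and is at most `1` on it. -/
lemma cutoffMass_lt_one (h : S.Admissible q a) : S.cutoffMass a q < 1 := by
  rw [cutoffMass_eq, ← sum_filter_of_ne (p := fun i => a i ≠ 0) fun i _ hi ha =>
    hi (by rw [cutoff_eq_zero ha, zero_mul])]
  refine lt_of_le_of_lt (sum_le_sum fun i _ => ?_) h.sum_nbhdWeight_lt_one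
  exact mul_le_of_le_one_left (S.nbhdWeight_nonneg i q) cutoff_le_one

lemma shrink_denom_pos (h : S.Admissible q a) (ht1 : t ≤ 1) :
    0 < 1 - t * S.cutoffMass a q := by
  nlinarith [cutoffMass_lt_one h, cutoffMass_nonneg (S := S) (q := q) h.mem_stdSimplex.1]

lemma shrink_mem_stdSimplex (h : S.Admissible q a) (ht1 : t ≤ 1) :
    S.shrink t q a ∈ stdSimplex ℝ V := by
  have hden := shrink_denom_pos h ht1
  refine ⟨fun x => div_nonneg (mul_nonneg ((ASC.coe_mem_stdSimplex q).1 x) ?_) hden.le, ?_⟩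
  · have hρ := nbhdCutoff_mem_Icc (S := S) (x := x) h.mem_stdSimplex.1
    linarith [mul_le_one₀ ht1 hρ.1 hρ.2]
  · simp only [shrink, ← sum_div, mul_sub, mul_one, sum_sub_distrib,
      (ASC.coe_mem_stdSimplex q).2]
    rw [div_eq_one_iff_eq hden.ne', cutoffMass, mul_sum]
    congr 1
    exact sum_congr rfl fun x _ => by ring

lemma shrink_ne_zero (h : S.shrink t q a x ≠ 0) : q.1 x ≠ 0 ∧ t * S.nbhdCutoff a x ≠ 1 :=
  ⟨fun h' => h (by simp [shrink, h']), fun h' => h (by simp [shrink, h'])⟩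

lemma deformWeight_mem_stdSimplex (o : ι) (h : S.Admissible q a) :
    S.deformWeight o θ q a ∈ stdSimplex ℝ V :=
  one_sub_mul_add_mul_mem_stdSimplex
    (one_sub_mul_add_mul_mem_stdSimplex (shrink_mem_stdSimplex h stage_le_one)
      (spread_mem_stdSimplex h.mem_stdSimplex) stage_nonneg stage_le_one)
    (single_mem_stdSimplex ℝ _) stage_nonneg stage_le_one

lemma deformWeight_ne_zero {o : ι} (h : S.deformWeight o θ q a x ≠ 0) :
    (q.1 x ≠ 0 ∧ stage 1 θ ≠ 1 ∧ stage 0 θ * S.nbhdCutoff a x ≠ 1) ∨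
      ∃ i, x = S.vertex i ∧ ((stage 1 θ ≠ 0 ∧ excess a i ≠ 0) ∨ stage 2 θ ≠ 0) := by
  rcases ne_zero_of_one_sub_mul_add_mul_ne_zero h with ⟨-, h'⟩ | ⟨h2, h'⟩
  · rcases ne_zero_of_one_sub_mul_add_mul_ne_zero h' with ⟨h1, h''⟩ | ⟨h1, h''⟩
    · exact Or.inl ⟨(shrink_ne_zero h'').1, h1, (shrink_ne_zero h'').2⟩
    · obtain ⟨i, rfl, hi⟩ := spread_ne_zero h''
      exact Or.inr ⟨i, rfl, Or.inl ⟨h1, hi⟩⟩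
  · refine Or.inr ⟨o, of_not_not fun hx => h' ?_, Or.inr h2⟩
    exact Pi.single_eq_of_ne hx 1

/-- Once the spread stage starts, the shrink stage is complete, so the mass next to a
vertex carrying excess has been removed. -/
lemma deformWeight_indep (o : ι) {x y : V}
    (hx : S.deformWeight o θ q a x ≠ 0) (hy : S.deformWeight o θ q a y ≠ 0) : ¬ G.Adj x y := by
  have key : ∀ x i, (q.1 x ≠ 0 ∧ stage 1 θ ≠ 1 ∧ stage 0 θ * S.nbhdCutoff a x ≠ 1) →
      ((stage 1 θ ≠ 0 ∧ excess a i ≠ 0) ∨ stage 2 θ ≠ 0) → ¬ G.Adj x (S.vertex i) := by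
    rintro x i ⟨-, h1, hρ⟩ (⟨h1', hi⟩ | h2) hadj
    · apply hρ
      rw [stage_eq_one_of_succ_ne_zero (j := 0) h1', nbhdCutoff_of_adj hadj,
        cutoff_eq_one_of_excess_ne_zero hi, one_mul]
    · exact h1 (stage_eq_one_of_succ_ne_zero (j := 1) h2)
  rcases deformWeight_ne_zero hx with hx' | ⟨i, rfl, hi⟩ <;>
    rcases deformWeight_ne_zero hy with hy' | ⟨j, rfl, hj⟩
  · exact not_adj_of_ne_zero q hx'.1 hy'.1
  · exact key x j hx' hj
  · exact fun hadj => key y i hy' hi hadj.symm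
  · exact S.not_adj i j

lemma deformWeight_zero (o : ι) : S.deformWeight o 0 q a = q.1 := by
  funext x; simp [deformWeight, shrink, stage]

lemma deformWeight_one (o : ι) : S.deformWeight o 1 q a = Pi.single (S.vertex o) 1 := by
  funext x; simp [deformWeight, stage_two_one]

lemma continuous_deformWeight (o : ι) (x : V) :
    Continuous fun z : I × S.admissibleSet => S.deformWeight o z.1 z.2.1.1 z.2.1.2 x := by
  have cst : ∀ j, Continuous fun z : I × S.admissibleSet => stage j z.1 :=
    fun j => continuous_stage.comp (continuous_subtype_val.comp continuous_fst)
  have cq : ∀ y, Continuous fun z : I × S.admissibleSet => z.2.1.1.1 y :=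
    fun y => (ASC.continuous_apply_coe y).comp
      (continuous_fst.comp (continuous_subtype_val.comp continuous_snd))
  have ca : ∀ i, Continuous fun z : I × S.admissibleSet => z.2.1.2 i :=
    fun i => (continuous_apply i).comp
      (continuous_snd.comp (continuous_subtype_val.comp continuous_snd))
  have cρ : ∀ y, Continuous fun z : I × S.admissibleSet => S.nbhdCutoff z.2.1.2 y :=
    fun y => continuous_finsetSum _ fun i _ => by
      split_ifs
      exacts [continuous_const.min ((ca i).div_const _), continuous_const]
  have cexcess : ∀ i, Continuous fun z : I × S.admissibleSet => excess z.2.1.2 i :=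
    fun i => ((ca i).sub continuous_const).max continuous_const
  have cshrink : Continuous fun z : I × S.admissibleSet =>
      S.shrink (stage 0 z.1) z.2.1.1 z.2.1.2 x :=
    ((cq x).mul (continuous_const.sub ((cst 0).mul (cρ x)))).div
      (continuous_const.sub ((cst 0).mul (continuous_finsetSum _ fun y _ => (cq y).mul (cρ y))))
      fun z => (shrink_denom_pos z.2.2 stage_le_one).ne'
  have cspread : Continuous fun z : I × S.admissibleSet => S.spread z.2.1.2 x :=
    continuous_finsetSum _ fun i _ => by
      split_ifs
      exacts [(cexcess i).div (continuous_finsetSum _ fun j _ => cexcess j)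
        fun z => (sum_excess_pos z.2.2.mem_stdSimplex).ne', continuous_const]
  unfold deformWeight
  fun_prop

variable (S) in
noncomputable def contraction (o : ι) : C(I × S.admissibleSet, G.indepComplex.space) where
  toFun z := indepPoint (S.deformWeight o z.1 z.2.1.1 z.2.1.2)
    (deformWeight_mem_stdSimplex o z.2.2) fun _ _ => deformWeight_indep o
  continuous_toFun := continuous_indepPoint (continuous_deformWeight o) _ _

lemma contraction_zero (o : ι) (z : S.admissibleSet) : S.contraction o (0, z) = z.1.1 :=
  Subtype.ext (deformWeight_zero o)

lemma contraction_one (o : ι) (z : S.admissibleSet) :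
    S.contraction o (1, z) = vertexPoint (S.vertex o) :=
  Subtype.ext (deformWeight_one o)

end SimpleGraph.DistantFamily

/-! ### Kuhn triangulations of the cube -/

lemma Finset.card_le_card_add_one_of_forall_subset_or_subset {α : Type*} [Fintype α]
    {𝒯 : Finset (Finset α)} (h : ∀ T ∈ 𝒯, ∀ T' ∈ 𝒯, T ⊆ T' ∨ T' ⊆ T) :
    #𝒯 ≤ Fintype.card α + 1 := by
  calc #𝒯 = #(𝒯.image card) := (card_image_of_injOn fun T hT T' hT' hc =>
          (h T hT T' hT').elim (fun hs => eq_of_subset_of_card_le hs hc.ge)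
            fun hs => (eq_of_subset_of_card_le hs hc.le).symm).symm
    _ ≤ #(range (Fintype.card α + 1)) :=
          card_le_card (image_subset_iff.2 fun T _ => mem_range.2 (Nat.lt_succ_of_le
            (card_le_univ T)))
    _ = _ := card_range _

lemma max_zero_min_sub_add_max_zero_sub_max (c M X : ℝ) :
    max 0 (min c M - X) + max 0 (M - max c X) = max 0 (M - X) := by
  simp only [max_def, min_def]
  split_ifs <;> linarith

lemma Finset.sum_powerset_max_zero_inf_sub_sup {ι : Type*} [DecidableEq ι] (s : Finset ι)
    (F : ι → I) : ∑ T ∈ s.powerset, max 0 (((T.inf F : I) : ℝ) - ((s \ T).sup F : I)) = 1 := by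
  induction s using Finset.induction_on with
  | empty => simp
  | @insert a s ha ih =>
    rw [sum_powerset_insert ha, ← sum_add_distrib]
    refine (sum_congr rfl fun T hT => ?_).trans ih
    have haT : a ∉ T := fun h => ha (mem_powerset.1 hT h)
    rw [insert_sdiff_of_notMem _ haT, insert_sdiff_insert, sdiff_insert_of_notMem ha, sup_insert,
      inf_insert, add_comm]
    simpa using max_zero_min_sub_add_max_zero_sub_max (F a) (T.inf F : I) ((s \ T).sup F : I)

namespace Cube

variable {κ : Type*} {N : ℕ}

lemma isClosed_boundary [Finite κ] : IsClosed (boundary κ) := by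
  have : boundary κ = ⋃ i, (fun p : κ → I => p i) ⁻¹' {0, 1} := by
    ext p; simp [boundary]
  rw [this]
  exact isClosed_iUnion_of_finite fun i => (Set.toFinite _).isClosed.preimage (continuous_apply i)

/-- The index of the cell of mesh `1 / N` containing `p i`; the last cell is closed, so that
`p i = 1` lies in the cell `N - 1`. -/
noncomputable def cellIndex (N : ℕ) (p : κ → I) (i : κ) : ℕ := min ⌊N * (p i : ℝ)⌋₊ (N - 1)

lemma sub_cellIndex_mem (N : ℕ) (p : κ → I) (i : κ) : N * (p i : ℝ) - cellIndex N p i ∈ I := by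
  have hNp : 0 ≤ N * (p i : ℝ) := mul_nonneg N.cast_nonneg (p i).2.1
  have hfl := Nat.floor_le hNp
  have hmin : (cellIndex N p i : ℝ) ≤ ⌊N * (p i : ℝ)⌋₊ := by exact_mod_cast min_le_left _ _
  refine ⟨by linarith, ?_⟩
  rcases le_total ⌊N * (p i : ℝ)⌋₊ (N - 1) with h | h
  · rw [cellIndex, min_eq_left h]
    linarith [Nat.lt_floor_add_one (N * (p i : ℝ))]
  · rcases Nat.eq_zero_or_pos N with rfl | hN
    · simp [cellIndex]
    · rw [cellIndex, min_eq_right h, Nat.cast_pred hN]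
      linarith [mul_le_of_le_one_right N.cast_nonneg (p i).2.2]

noncomputable def cellFrac (N : ℕ) (p : κ → I) (i : κ) : I :=
  ⟨N * p i - cellIndex N p i, sub_cellIndex_mem N p i⟩

noncomputable def cellVertex (hN : 0 < N) (p : κ → I) (T : Finset κ) : κ → Fin (N + 1) :=
  fun i => ⟨cellIndex N p i + if i ∈ T then 1 else 0, by
    have : cellIndex N p i ≤ N - 1 := min_le_right _ _
    split_ifs <;> omega⟩

lemma cellVertex_injective (hN : 0 < N) (p : κ → I) : Function.Injective (cellVertex hN p) := by
  intro T T' h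
  ext i
  have := congrArg Fin.val (congrFun h i)
  simp only [cellVertex] at this
  split_ifs at this <;> simp_all

noncomputable def offset (N : ℕ) (z : κ → Fin (N + 1)) (p : κ → I) (i : κ) : ℝ :=
  N * p i - z i

lemma offset_cellVertex (hN : 0 < N) (p : κ → I) (T : Finset κ) (i : κ) :
    offset N (cellVertex hN p T) p i = cellFrac N p i - if i ∈ T then 1 else 0 := by
  simp only [offset, cellVertex, cellFrac]
  split_ifs <;> push_cast <;> ring

noncomputable def latticePoint (z : κ → Fin (N + 1)) : κ → I :=
  fun i => ⟨(z i : ℝ) / N, div_nonneg (Nat.cast_nonneg _) N.cast_nonneg,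
    div_le_one_of_le₀ (by exact_mod_cast (z i).is_le) N.cast_nonneg⟩

variable [Fintype κ] [Nonempty κ]

/-- The piecewise affine hat function of the vertex `z / N` of the Freudenthal–Kuhn
triangulation of the cube with mesh `1 / N`. -/
noncomputable def kuhnHat (N : ℕ) (z : κ → Fin (N + 1)) (p : κ → I) : ℝ :=
  max 0 (1 + min 0 (univ.inf' univ_nonempty (offset N z p))
    - max 0 (univ.sup' univ_nonempty (offset N z p)))

lemma kuhnHat_nonneg (z : κ → Fin (N + 1)) (p : κ → I) : 0 ≤ kuhnHat N z p := le_max_left _ _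

lemma continuous_kuhnHat (z : κ → Fin (N + 1)) : Continuous (kuhnHat N z) := by
  have : ∀ i, Continuous fun p : κ → I => offset N z p i := fun i => by
    unfold offset; fun_prop
  unfold kuhnHat
  refine continuous_const.max (Continuous.sub (continuous_const.add (continuous_const.min ?_))
    (continuous_const.max ?_))
  exacts [Continuous.finset_inf'_apply _ fun i _ => this i,
    Continuous.finset_sup'_apply _ fun i _ => this i]

lemma abs_offset_lt_one {z : κ → Fin (N + 1)} {p : κ → I} (h : kuhnHat N z p ≠ 0) (i : κ) :
    |offset N z p i| < 1 := by
  have hpos : 0 < 1 + min 0 (univ.inf' univ_nonempty (offset N z p))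
      - max 0 (univ.sup' univ_nonempty (offset N z p)) :=
    lt_of_not_ge fun hle => h (max_eq_left hle)
  have h1 := (min_le_right (0 : ℝ) _).trans (inf'_le (offset N z p) (mem_univ i))
  have h2 := (le_sup' (offset N z p) (mem_univ i)).trans (le_max_right 0 _)
  rw [abs_lt]
  constructor <;> linarith [min_le_left 0 (univ.inf' univ_nonempty (offset N z p)),
    le_max_left 0 (univ.sup' univ_nonempty (offset N z p))]

lemma dist_latticePoint_lt (hN : 0 < N) {z : κ → Fin (N + 1)} {p : κ → I}
    (h : kuhnHat N z p ≠ 0) : dist p (latticePoint z) < 1 / N := by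
  have hN' : (0 : ℝ) < N := by exact_mod_cast hN
  refine (dist_pi_lt_iff (by positivity)).2 fun i => ?_
  rw [Subtype.dist_eq, Real.dist_eq, lt_div_iff₀ hN']
  calc |(p i : ℝ) - latticePoint z i| * N = |offset N z p i| := by
        rw [← abs_of_pos hN', ← abs_mul]
        congr 1
        simp only [latticePoint, offset]
        field_simp
    _ < 1 := abs_offset_lt_one h i

lemma eq_cellVertex (hN : 0 < N) {z : κ → Fin (N + 1)} {p : κ → I} (h : kuhnHat N z p ≠ 0) :
    z = cellVertex hN p {i | (z i : ℕ) = cellIndex N p i + 1} := by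
  funext i
  have hz := abs_lt.1 (abs_offset_lt_one h i)
  have hf := (cellFrac N p i).2
  simp only [offset, cellFrac] at hz hf
  have h1 : cellIndex N p i < (z i : ℕ) + 1 := by exact_mod_cast (by linarith [hf.1] :
    (cellIndex N p i : ℝ) < (z i : ℕ) + 1)
  have h2 : (z i : ℕ) < cellIndex N p i + 2 := by exact_mod_cast (by linarith [hf.2] :
    ((z i : ℕ) : ℝ) < cellIndex N p i + 2)
  ext
  simp only [cellVertex, mem_filter, mem_univ, true_and]
  split_ifs <;> omega

lemma min_zero_inf'_offset_cellVertex (hN : 0 < N) (p : κ → I) (T : Finset κ) :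
    min 0 (univ.inf' univ_nonempty (offset N (cellVertex hN p T) p))
      = (T.inf (cellFrac N p) : I) - 1 := by
  refine le_antisymm ?_ (le_min (by linarith [(T.inf (cellFrac N p)).2.2])
    (le_inf' _ _ fun i _ => ?_))
  · rcases T.eq_empty_or_nonempty with rfl | hT
    · simp
    · obtain ⟨t, ht, hteq⟩ := exists_mem_eq_inf T hT (cellFrac N p)
      refine (min_le_right _ _).trans ((inf'_le _ (mem_univ t)).trans ?_)
      rw [offset_cellVertex, if_pos ht, hteq]
  · rw [offset_cellVertex]
    split_ifs with hi
    · linarith [Subtype.coe_le_coe.2 (inf_le (f := cellFrac N p) hi)]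
    · linarith [(cellFrac N p i).2.1, (T.inf (cellFrac N p)).2.2]

lemma max_zero_sup'_offset_cellVertex (hN : 0 < N) (p : κ → I) (T : Finset κ) :
    max 0 (univ.sup' univ_nonempty (offset N (cellVertex hN p T) p))
      = ((univ \ T).sup (cellFrac N p) : I) := by
  refine le_antisymm (max_le ((univ \ T).sup (cellFrac N p)).2.1 (sup'_le _ _ fun i _ => ?_)) ?_
  · rw [offset_cellVertex]
    split_ifs with hi
    · linarith [(cellFrac N p i).2.2, ((univ \ T).sup (cellFrac N p)).2.1]
    · simpa using Subtype.coe_le_coe.2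
        (le_sup (f := cellFrac N p) (mem_sdiff.2 ⟨mem_univ i, hi⟩))
  · rcases (univ \ T).eq_empty_or_nonempty with h | hT
    · simp [h]
    · obtain ⟨j, hj, hjeq⟩ := exists_mem_eq_sup _ hT (cellFrac N p)
      refine le_trans ?_ ((le_sup' _ (mem_univ j)).trans (le_max_right _ _))
      rw [offset_cellVertex, if_neg (mem_sdiff.1 hj).2, hjeq, sub_zero]

lemma kuhnHat_cellVertex (hN : 0 < N) (p : κ → I) (T : Finset κ) :
    kuhnHat N (cellVertex hN p T) p
      = max 0 (((T.inf (cellFrac N p) : I) : ℝ) - ((univ \ T).sup (cellFrac N p) : I)) := by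
  rw [kuhnHat, min_zero_inf'_offset_cellVertex, max_zero_sup'_offset_cellVertex]
  ring_nf

lemma sum_kuhnHat (hN : 0 < N) (p : κ → I) : ∑ z, kuhnHat N z p = 1 := by
  rw [← sum_subset (subset_univ (univ.powerset.image (cellVertex hN p))) fun z _ hz =>
      of_not_not fun h => hz (mem_image.2 ⟨_, mem_powerset.2 (subset_univ _),
        (eq_cellVertex hN h).symm⟩),
    sum_image fun T _ T' _ h => cellVertex_injective hN p h]
  simp only [kuhnHat_cellVertex]
  exact sum_powerset_max_zero_inf_sub_sup univ (cellFrac N p)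

lemma cellFrac_lt_of_kuhnHat_ne_zero {hN : 0 < N} {p : κ → I} {T : Finset κ}
    (h : kuhnHat N (cellVertex hN p T) p ≠ 0) {i j : κ} (hi : i ∈ T) (hj : j ∉ T) :
    cellFrac N p j < cellFrac N p i := by
  rw [kuhnHat_cellVertex] at h
  have hlt : (((univ \ T).sup (cellFrac N p) : I) : ℝ) < ((T.inf (cellFrac N p) : I) : ℝ) := by
    by_contra! hle
    exact h (max_eq_left (by linarith))
  exact lt_of_le_of_lt (le_sup (f := cellFrac N p) (mem_sdiff.2 ⟨mem_univ j, hj⟩))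
    (lt_of_lt_of_le (Subtype.coe_lt_coe.1 hlt) (inf_le hi))

/-- The vertices whose hat functions do not vanish at `p` lie on a chain of faces of one
simplex. -/
lemma card_kuhnHat_ne_zero_le (hN : 0 < N) (p : κ → I) :
    #{z | kuhnHat N z p ≠ 0} ≤ Fintype.card κ + 1 := by
  set 𝒯 : Finset (Finset κ) := {T | kuhnHat N (cellVertex hN p T) p ≠ 0}
  calc #{z | kuhnHat N z p ≠ 0} ≤ #(𝒯.image (cellVertex hN p)) := card_le_card fun z hz => by
        have h := (mem_filter.1 hz).2
        have e := eq_cellVertex hN h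
        rw [e] at h ⊢
        exact mem_image_of_mem _ (mem_filter.2 ⟨mem_univ _, h⟩)
    _ ≤ #𝒯 := card_image_le
    _ ≤ Fintype.card κ + 1 :=
        card_le_card_add_one_of_forall_subset_or_subset fun T hT T' hT' => by
          by_contra! hc
          obtain ⟨i, hiT, hiT'⟩ := not_subset.1 hc.1
          obtain ⟨j, hjT', hjT⟩ := not_subset.1 hc.2
          exact (cellFrac_lt_of_kuhnHat_ne_zero (mem_filter.1 hT).2 hiT hjT).asymm
            (cellFrac_lt_of_kuhnHat_ne_zero (mem_filter.1 hT').2 hjT' hiT')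

variable {ι : Type*}

lemma exists_coloring_kuhnHat {O : ι → Set (κ → I)} (hO : ∀ i, IsOpen (O i))
    (hcover : ∀ p, ∃ i, p ∈ O i) {i₀ : ι} (hbd : boundary κ ⊆ O i₀) :
    ∃ N : ℕ, 0 < N ∧ ∃ col : (κ → Fin (N + 1)) → ι,
      (∀ z p, kuhnHat N z p ≠ 0 → p ∈ O (col z)) ∧
        ∀ z, ∀ p ∈ boundary κ, kuhnHat N z p ≠ 0 → col z = i₀ := by
  obtain ⟨δ₁, hδ₁, hleb⟩ := lebesgue_number_lemma_of_metric isCompact_univ hO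
    fun p _ => Set.mem_iUnion.2 (hcover p)
  obtain ⟨ρ, hρ, hthick⟩ :=
    isClosed_boundary.isCompact.exists_thickening_subset_open (hO i₀) hbd
  set δ := min δ₁ (ρ / 2)
  have hδ : 0 < δ := lt_min hδ₁ (half_pos hρ)
  obtain ⟨N', hN'⟩ := exists_nat_one_div_lt hδ
  have hN : (1 : ℝ) / (N' + 1 : ℕ) < δ := by exact_mod_cast hN'
  have hball : ∀ x, ∃ i, Metric.ball x δ ⊆ O i := fun x =>
    (hleb x (Set.mem_univ x)).imp fun i h => (Metric.ball_subset_ball (min_le_left _ _)).trans h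
  let col : (κ → Fin (N' + 1 + 1)) → ι := fun z =>
    if Metric.ball (latticePoint z) δ ⊆ O i₀ then i₀ else (hball (latticePoint z)).choose
  have hcol : ∀ z, Metric.ball (latticePoint z) δ ⊆ O (col z) := fun z => by
    by_cases h : Metric.ball (latticePoint z) δ ⊆ O i₀
    · simp [col, h]
    · simpa [col, h] using (hball (latticePoint z)).choose_spec
  refine ⟨N' + 1, N'.succ_pos, col, fun z p hz => hcol z ?_, fun z p hp hz => if_pos ?_⟩
  · exact (dist_latticePoint_lt N'.succ_pos hz).trans hN
  · refine fun y hy => hthick (Metric.mem_thickening_iff.2 ⟨p, hp, ?_⟩)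
    have := dist_latticePoint_lt N'.succ_pos hz
    rw [Metric.mem_ball] at hy
    linarith [dist_triangle_right y p (latticePoint z), min_le_right δ₁ (ρ / 2)]

theorem exists_partitionOfUnity [Fintype ι] {O : ι → Set (κ → I)} (hO : ∀ i, IsOpen (O i))
    (hcover : ∀ p, ∃ i, p ∈ O i) {i₀ : ι} (hbd : boundary κ ⊆ O i₀) :
    ∃ a : (κ → I) → ι → ℝ, Continuous a ∧ (∀ p, a p ∈ stdSimplex ℝ ι) ∧
      (∀ p i, a p i ≠ 0 → p ∈ O i) ∧ (∀ p, #{i | a p i ≠ 0} ≤ Fintype.card κ + 1) ∧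
        ∀ p ∈ boundary κ, a p = Pi.single i₀ 1 := by
  obtain ⟨N, hN, col, hcol, hcol_bd⟩ := exists_coloring_kuhnHat hO hcover hbd
  have hsupp : ∀ p i, ∑ z with col z = i, kuhnHat N z p ≠ 0 →
      ∃ z, col z = i ∧ kuhnHat N z p ≠ 0 := fun p i h => by
    obtain ⟨z, hz, hne⟩ := exists_ne_zero_of_sum_ne_zero h
    exact ⟨z, (mem_filter.1 hz).2, hne⟩
  refine ⟨fun p i => ∑ z with col z = i, kuhnHat N z p,
    continuous_pi fun i => continuous_finsetSum _ fun z _ => continuous_kuhnHat z,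
    fun p => ⟨fun i => sum_nonneg fun z _ => kuhnHat_nonneg z p, ?_⟩, fun p i h => ?_,
    fun p => ?_, fun p hp => funext fun i => ?_⟩
  · exact (sum_fiberwise _ col _).trans (sum_kuhnHat hN p)
  · obtain ⟨z, rfl, hz⟩ := hsupp p i h
    exact hcol z p hz
  · calc #{i | ∑ z with col z = i, kuhnHat N z p ≠ 0}
        ≤ #(image col {z | kuhnHat N z p ≠ 0}) := card_le_card fun i hi => by
          obtain ⟨z, rfl, hz⟩ := hsupp p i (mem_filter.1 hi).2
          exact mem_image_of_mem _ (mem_filter.2 ⟨mem_univ z, hz⟩)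
      _ ≤ _ := card_image_le.trans (card_kuhnHat_ne_zero_le hN p)
  · have hzero : ∀ z, col z ≠ i₀ → kuhnHat N z p = 0 := fun z hz =>
      of_not_not fun h => hz (hcol_bd z p hp h)
    dsimp only
    rcases eq_or_ne i i₀ with rfl | hi
    · rw [Pi.single_eq_same, sum_filter_of_ne fun z _ h => of_not_not fun hz => h (hzero z hz),
        sum_kuhnHat hN]
    · rw [Pi.single_eq_of_ne hi]
      exact sum_eq_zero fun z hz => hzero z ((mem_filter.1 hz).2 ▸ hi)

end Cube

/-! ### Null-homotopies relative to the boundary -/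

namespace Cube

variable {κ : Type*}

/-- Rescales `[s/4, 1 - s/4]^κ` affinely onto the whole cube. -/
noncomputable def rescale (s : I) (p : κ → I) : κ → I :=
  fun i => Set.projIcc 0 1 zero_le_one ((p i - s / 4) / (1 - s / 2))

lemma rescale_zero (p : κ → I) : rescale 0 p = p :=
  funext fun i => by simp [rescale, Set.projIcc_of_mem zero_le_one (p i).2]

lemma continuous_rescale : Continuous fun y : I × (κ → I) => rescale y.1 y.2 := by
  refine continuous_pi fun i => continuous_projIcc.comp (Continuous.div (by fun_prop)
    (by fun_prop) fun y => ?_)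
  linarith [y.1.2.2]

variable [Fintype κ] [Nonempty κ]

noncomputable def depth (p : κ → I) : ℝ :=
  univ.inf' univ_nonempty fun i => min (p i : ℝ) (1 - p i)

lemma depth_nonneg (p : κ → I) : 0 ≤ depth p :=
  le_inf' _ _ fun i _ => le_min (p i).2.1 (sub_nonneg.2 (p i).2.2)

lemma continuous_depth : Continuous (depth (κ := κ)) :=
  Continuous.finset_inf'_apply _ fun i _ => by fun_prop

lemma depth_eq_zero {p : κ → I} (hp : p ∈ boundary κ) : depth p = 0 := by
  obtain ⟨i, hi⟩ := hp
  refine le_antisymm ((inf'_le _ (mem_univ i)).trans ?_) (depth_nonneg p)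
  rcases hi with h | h <;> simp [h]

lemma rescale_mem_boundary {s : I} {p : κ → I} (h : depth p = s / 4) :
    rescale s p ∈ boundary κ := by
  obtain ⟨i, -, hi⟩ := exists_mem_eq_inf' univ_nonempty fun i => min (p i : ℝ) (1 - p i)
  rw [← depth, h] at hi
  have hden : (0 : ℝ) < 1 - s / 2 := by linarith [s.2.2]
  refine ⟨i, ?_⟩
  rcases le_total (p i : ℝ) (1 - p i) with hc | hc
  · rw [min_eq_left hc] at hi
    refine Or.inl (Subtype.ext ?_)
    simp [rescale, ← hi]
  · rw [min_eq_right hc] at hi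
    refine Or.inr (Subtype.ext ?_)
    have : ((p i : ℝ) - s / 4) / (1 - s / 2) = 1 := by
      rw [div_eq_one_iff_eq hden.ne']; linarith
    simp [rescale, this]

noncomputable def depthParam : C(κ → I, I) :=
  ⟨fun p => Set.projIcc 0 1 zero_le_one (4 * depth p),
    continuous_projIcc.comp (continuous_const.mul continuous_depth)⟩

lemma depthParam_eq_zero {p : κ → I} (hp : p ∈ boundary κ) : depthParam p = 0 := by
  simp [depthParam, depth_eq_zero hp]

end Cube

lemma ContinuousMap.homotopicRel_comp_const {Y X : Type*} [TopologicalSpace Y]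
    [TopologicalSpace X] {A : Set Y} (γ : C(I, X)) (φ : C(Y, I)) (hφ : ∀ y ∈ A, φ y = 0) :
    (γ.comp φ).HomotopicRel (ContinuousMap.const Y (γ 0)) A :=
  ⟨{ toFun := fun z => γ ⟨σ z.1 * φ z.2, mul_mem (σ z.1).2 (φ z.2).2⟩
     continuous_toFun := γ.continuous.comp (by fun_prop)
     map_zero_left := fun y => by simp
     map_one_left := fun y => by simp
     prop' := fun t y hy => by simp [hφ y hy] }⟩

/-- Push the homotopy into the shrinking inner cube `[t/4, 1 - t/4]^κ`, and fill the outside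
with the path `γ` traced by the boundary, according to the depth. -/
theorem GenLoop.homotopicRel_comp_depthParam {κ X : Type*} [Fintype κ] [Nonempty κ]
    [TopologicalSpace X] {x : X} {f : GenLoop κ X x} (H : C(I × (κ → I), X)) (γ : C(I, X))
    (h0 : ∀ p, H (0, p) = f p) (h1 : ∀ p, H (1, p) = γ 1)
    (hγ : ∀ s, ∀ p ∈ Cube.boundary κ, H (s, p) = γ s) :
    f.1.HomotopicRel (γ.comp Cube.depthParam) (Cube.boundary κ) := by
  refine ⟨{ toFun := fun z => if (z.1 : ℝ) / 4 ≤ Cube.depth z.2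
              then H (z.1, Cube.rescale z.1 z.2) else γ (Cube.depthParam z.2)
            continuous_toFun := ?_, map_zero_left := fun p => ?_,
            map_one_left := fun p => ?_, prop' := fun t p hp => ?_ }⟩
  · refine Continuous.if_le (H.continuous.comp (continuous_fst.prodMk Cube.continuous_rescale))
      (by fun_prop) (by fun_prop) (Cube.continuous_depth.comp continuous_snd) fun z hz => ?_
    rw [hγ _ _ (Cube.rescale_mem_boundary hz.symm)]
    simp [Cube.depthParam, ← hz, mul_div_cancel₀, Set.projIcc_of_mem zero_le_one z.1.2]
  · simp [Cube.depth_nonneg, Cube.rescale_zero, h0]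
  · dsimp only
    split_ifs with hp
    · have : Cube.depthParam p = 1 :=
        Set.projIcc_of_right_le zero_le_one (by linarith [show ((1 : I) : ℝ) = 1 from rfl])
      simp [h1, this]
    · rfl
  · have hd := Cube.depth_eq_zero hp
    change (if (t : ℝ) / 4 ≤ Cube.depth p then _ else _) = _
    split_ifs with ht
    · obtain rfl : t = 0 :=
        Subtype.ext (le_antisymm (show (t : ℝ) ≤ 0 by rw [hd] at ht; linarith) t.2.1)
      simp [Cube.rescale_zero, h0]
    · simp [Cube.depthParam_eq_zero hp, ← hγ 0 p hp, h0, GenLoop.boundary f p hp]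

theorem GenLoop.homotopic_const_of_homotopy {κ X : Type*} [Fintype κ] [Nonempty κ]
    [TopologicalSpace X] {x c : X} {f : GenLoop κ X x} (H : C(I × (κ → I), X))
    (h0 : ∀ p, H (0, p) = f p) (h1 : ∀ p, H (1, p) = c)
    (hbd : ∀ s, ∀ p ∈ Cube.boundary κ, ∀ p' ∈ Cube.boundary κ, H (s, p) = H (s, p')) :
    GenLoop.Homotopic f GenLoop.const := by
  obtain ⟨p₀, hp₀⟩ : (Cube.boundary κ).Nonempty :=
    ⟨fun _ => 0, Classical.arbitrary κ, Or.inl rfl⟩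
  let γ : C(I, X) := H.comp ⟨fun s => (s, p₀), by fun_prop⟩
  have hγ0 : γ 0 = x := (h0 p₀).trans (GenLoop.boundary f p₀ hp₀)
  exact (GenLoop.homotopicRel_comp_depthParam H γ h0 (fun p => (h1 p).trans (h1 p₀).symm)
    fun s p hp => hbd s p hp p₀ hp₀).trans
      (hγ0 ▸ ContinuousMap.homotopicRel_comp_const γ _ fun p hp => Cube.depthParam_eq_zero hp)

/-! ### Connectivity of the independence complex -/

namespace SimpleGraph.DistantFamily

variable {V ι : Type} [Fintype V] [Fintype ι] {G : SimpleGraph V}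

lemma joined_vertexPoint (S : G.DistantFamily ι) (hι : 1 < Fintype.card ι) (o : ι)
    (q : G.indepComplex.space) : Joined q (vertexPoint (S.vertex o)) := by
  obtain ⟨i, hi⟩ := S.exists_mul_nbhdWeight_lt_one q hι
  let z : S.admissibleSet := ⟨(q, Pi.single i 1), S.admissible_single (by simpa using hi)⟩
  exact ⟨{ toFun := fun s => S.contraction o (s, z)
           continuous_toFun := by fun_prop
           source' := contraction_zero o z
           target' := contraction_one o z }⟩

lemma pathConnectedSpace (S : G.DistantFamily ι) (hι : 1 < Fintype.card ι) :
    PathConnectedSpace G.indepComplex.space := by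
  obtain ⟨o⟩ := Fintype.card_pos_iff.1 (zero_lt_one.trans hι)
  exact ⟨⟨vertexPoint (S.vertex o)⟩, fun q q' =>
    (S.joined_vertexPoint hι o q).trans (S.joined_vertexPoint hι o q').symm⟩

theorem subsingleton_homotopyGroup {κ : Type} [Fintype κ] [Nonempty κ] (S : G.DistantFamily ι)
    (hι : Fintype.card κ + 1 < Fintype.card ι) (x : G.indepComplex.space) :
    Subsingleton (HomotopyGroup κ G.indepComplex.space x) := by
  suffices h : ∀ f : GenLoop κ G.indepComplex.space x, GenLoop.Homotopic f GenLoop.const from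
    ⟨fun a b => Quotient.inductionOn₂ a b fun f g => Quotient.sound ((h f).trans (h g).symm)⟩
  intro f
  set k := Fintype.card κ + 1
  obtain ⟨i₀, hi₀⟩ := S.exists_mul_nbhdWeight_lt_one x hι
  obtain ⟨a, ha, hmem, hsupp, hcard, hbd⟩ := Cube.exists_partitionOfUnity
    (O := fun i => f ⁻¹' {q | k * S.nbhdWeight i q < 1})
    (fun i => (isOpen_lt (continuous_const.mul (S.continuous_nbhdWeight i))
      continuous_const).preimage f.1.continuous)
    (fun p => S.exists_mul_nbhdWeight_lt_one (f p) hι) (i₀ := i₀)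
    (fun p hp => by simpa [GenLoop.boundary f p hp] using hi₀)
  let z : (κ → I) → S.admissibleSet := fun p =>
    ⟨(f p, a p), S.admissible_of_card_le k (hmem p) (hcard p) (hsupp p)⟩
  have hz : Continuous z := (f.1.continuous.prodMk ha).subtype_mk _
  refine GenLoop.homotopic_const_of_homotopy
    ((S.contraction i₀).comp ⟨fun y => (y.1, z y.2), by fun_prop⟩)
    (fun p => contraction_zero i₀ (z p)) (fun p => contraction_one i₀ (z p))
    fun s p hp p' hp' => ?_
  have : z p = z p' := Subtype.ext (Prod.ext
    ((GenLoop.boundary f p hp).trans (GenLoop.boundary f p' hp').symm)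
    ((hbd p hp).trans (hbd p' hp').symm))
  simp [this]

end SimpleGraph.DistantFamily

/-- If `G` is connected of diameter `n`, then `I_G` is
`⌊n/3 - 1⌋`-connected. -/
theorem statement18 {V : Type} [Fintype V] (G : SimpleGraph V) (hconn : G.Connected)
    (n : ℕ) (hdiam : G.diam = n) :
    NConnected ((n : ℤ) / 3 - 1) G.indepComplex.space := by
  have := hconn.nonempty
  obtain ⟨u, v, huv⟩ := G.exists_dist_eq_diam
  refine ⟨fun _ => ⟨SimpleGraph.vertexPoint u⟩, fun k hk x => ?_⟩
  obtain ⟨S⟩ := hconn.nonempty_distantFamily (k := k + 1) (u := u) (v := v) (by omega)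
  rcases k with _ | m
  · have := S.pathConnectedSpace (by simp)
    exact HomotopyGroup.pi0EquivZerothHomotopy.subsingleton
  · exact S.subsingleton_homotopyGroup (by simp) x
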